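/- Every nonzero bilinear form on ℂ² is represented, with respect to some basis, by a matrix of the form B(p,q) = [[1, p], [q, 0]] for some p, q ∈ ℂ, or by the matrix C = [[0, 1], [-1, 0]]. -/

import Mathlib

open Module

private lemma aux_basis_pair {b0 w : Fin 2 → ℂ} (h : LinearIndependent ℂ ![b0, w]) :
    ∃ b : Basis (Fin 2) ℂ (Fin 2 → ℂ), b 0 = b0 ∧ b 1 = w := by
  have hcard : Fintype.card (Fin 2) = finrank ℂ (Fin 2 → ℂ) := by simp
  refine ⟨basisOfLinearIndependentOfCardEqFinrank h hcard, ?_, ?_⟩ <;>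
    simp [coe_basisOfLinearIndependentOfCardEqFinrank]

theorem bilinear_form_classification
    (β : (Fin 2 → ℂ) →ₗ[ℂ] (Fin 2 → ℂ) →ₗ[ℂ] ℂ) (hβ : β ≠ 0) :
    (∃ (b : Basis (Fin 2) ℂ (Fin 2 → ℂ)) (p q : ℂ),
        Matrix.of (fun i j => β (b j) (b i)) = !![1, p; q, 0]) ∨
    (∃ b : Basis (Fin 2) ℂ (Fin 2 → ℂ),
        Matrix.of (fun i j => β (b j) (b i)) = !![0, 1; -1, 0]) := by
  set e := Pi.basisFun ℂ (Fin 2) with he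
  have hsqrt : ∀ c : ℂ, ∃ s : ℂ, s ^ 2 = c := fun c =>
    IsAlgClosed.exists_pow_nat_eq c zero_lt_two
  -- existence of a nonzero isotropic vector
  have hiso : ∃ w : Fin 2 → ℂ, w ≠ 0 ∧ β w w = 0 := by
    by_cases h11 : β (e 1) (e 1) = 0
    · exact ⟨e 1, (e).ne_zero 1, h11⟩
    · obtain ⟨d, hd⟩ := hsqrt ((β (e 0) (e 1) + β (e 1) (e 0)) ^ 2
        - 4 * β (e 1) (e 1) * β (e 0) (e 0))
      set m := β (e 0) (e 1) + β (e 1) (e 0) with hm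
      set x := -m + d with hx
      set c := 2 * β (e 1) (e 1) with hc
      refine ⟨c • e 0 + x • e 1, ?_, ?_⟩
      · intro h0
        have h1 := congrFun h0 0
        simp [he, hc, Pi.basisFun_apply] at h1
        simp [he] at h11
        exact h11 h1
      · have hexp : β (c • e 0 + x • e 1) (c • e 0 + x • e 1)
            = c ^ 2 * β (e 0) (e 0) + c * x * β (e 0) (e 1) + c * x * β (e 1) (e 0)
              + x ^ 2 * β (e 1) (e 1) := by
          simp [map_add, map_smul, smul_eq_mul]; ring
        rw [hexp, hx, hc, hm]
        linear_combination (β (e 1) (e 1)) * hd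
  by_cases halt : ∀ v, β v v = 0
  -- alternating case
  · right
    have hskew : ∀ x y, β x y = -β y x := by
      intro x y
      have h := halt (x + y)
      have hexp : β (x + y) (x + y)
          = β x x + β x y + β y x + β y y := by simp [map_add]; ring
      rw [hexp, halt x, halt y] at h
      linear_combination h
    have ha : β (e 0) (e 1) ≠ 0 := by
      intro ha
      apply hβ
      apply (e).ext; intro i
      apply (e).ext; intro j
      have h10 : β (e 1) (e 0) = 0 := by rw [hskew, ha, neg_zero]
      fin_cases i <;> fin_cases j <;>
        simp only [LinearMap.zero_apply] <;>
        first
          | exact halt _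
          | exact ha
          | exact h10
    set a := β (e 0) (e 1) with hadef
    have h10 : β (e 1) (e 0) = -a := by rw [hskew]
    have hli : LinearIndependent ℂ ![e 0, (-a⁻¹) • e 1] := by
      rw [LinearIndependent.pair_iff]
      intro s t hst
      have h0 := congrFun hst 0
      have h1 := congrFun hst 1
      simp [he, Pi.basisFun_apply] at h0 h1
      refine ⟨h0, ?_⟩
      have : t * -a⁻¹ = 0 := by simpa using h1
      rcases mul_eq_zero.mp this with h | h
      · exact h
      · exact absurd (inv_eq_zero.mp (neg_eq_zero.mp h)) ha
    obtain ⟨b, hb0, hb1⟩ := aux_basis_pair hli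
    refine ⟨b, ?_⟩
    ext i j
    fin_cases i <;> fin_cases j <;>
      simp [hb0, hb1, map_smul, smul_eq_mul, halt, h10, ← hadef] <;>
      field_simp
  -- non-alternating case
  · left
    push_neg at halt
    obtain ⟨v, hv⟩ := halt
    obtain ⟨s, hs⟩ := hsqrt (β v v)
    have hs0 : s ≠ 0 := by
      intro h; rw [h] at hs; simp at hs; exact hv hs.symm
    set b0 := s⁻¹ • v with hb0def
    have hb00 : β b0 b0 = 1 := by
      simp [hb0def, map_smul, smul_eq_mul]
      field_simp
      linear_combination -hs
    have hb0ne : b0 ≠ 0 := by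
      intro h; rw [h] at hb00; simp at hb00
    obtain ⟨w, hw0, hww⟩ := hiso
    have hli : LinearIndependent ℂ ![b0, w] := by
      rw [LinearIndependent.pair_iff]
      intro σ τ hst
      by_cases hτ : τ = 0
      · subst hτ
        simp at hst
        rcases hst with h | h
        · exact ⟨h, rfl⟩
        · exact absurd h hb0ne
      · exfalso
        have hw : w = (-σ / τ) • b0 := by
          have h' : σ • b0 + τ • w = 0 := hst
          have : τ • w = -(σ • b0) := by
            rw [← neg_eq_of_add_eq_zero_right h'.symm.symm]
          funext i
          have := congrFun this i
          simp [smul_eq_mul] at this ⊢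
          field_simp
          linear_combination this
        have hc : β w w = (σ / τ) ^ 2 := by
          rw [hw]; simp [map_smul, smul_eq_mul, hb00]; ring
        rw [hww] at hc
        have hσ : σ = 0 := by
          have := hc.symm
          field_simp at this
          simpa using this
        rw [hσ] at hst
        simp at hst
        rcases hst with h | h
        · exact hτ h
        · exact hw0 h
    obtain ⟨b, hb0, hb1⟩ := aux_basis_pair hli
    refine ⟨b, β w b0, β b0 w, ?_⟩
    ext i j
    fin_cases i <;> fin_cases j <;> simp [hb0, hb1, hb00, hww]
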